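/- arXiv:2603.23379 — 7 statements merged into one kernel-verified Lean document; each statement's English description precedes it below -/
import Mathlib

section
/- For every integer n ≥ 1 and every real x with 0 ≤ x ≤ 1, we have log(1 + x + x²/2! + ... + xⁿ/n!) ≤ x − x^{n+1}/(e·(n+1)!). -/
/-! The Taylor sum `S` and the next term `t = xⁿ⁺¹/(n+1)!` satisfy `S + t ≤ eˣ` for `x ≥ 0`.
Since `e^{-s} ≥ 1 - s` and `eˣ ≤ e` on `[0, 1]`, we get `eˣ - t ≤ eˣ · e^{-t/e} = e^{x - t/e}`,
and taking logarithms gives the bound. -/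

open Real Finset Nat

lemma Real.exp_sub_le_exp_sub_div {x t c : ℝ} (ht : 0 ≤ t) (hc : 0 < c) (hxc : exp x ≤ c) :
    exp x - t ≤ exp (x - t / c) := by
  have hlin : 1 - t / c ≤ exp (-(t / c)) := by linarith [add_one_le_exp (-(t / c))]
  have hscaled : exp x * (t / c) ≤ t := by
    calc exp x * (t / c) ≤ c * (t / c) := by gcongr
      _ = t := by field_simp
  calc exp x - t ≤ exp x * (1 - t / c) := by linarith
    _ ≤ exp x * exp (-(t / c)) := by gcongr
    _ = exp (x - t / c) := by rw [← exp_add, sub_eq_add_neg]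

lemma Real.one_le_sum_pow_div_factorial {x : ℝ} (hx : 0 ≤ x) (n : ℕ) :
    1 ≤ ∑ i ∈ range (n + 1), x ^ i / (i ! : ℝ) := by
  rw [sum_range_succ']
  simp only [pow_zero, Nat.factorial_zero, Nat.cast_one, div_one, le_add_iff_nonneg_left]
  positivity

theorem stmt_0_general (n : ℕ) (x : ℝ) (hx0 : 0 ≤ x) (hx1 : x ≤ 1) :
    Real.log (∑ i ∈ Finset.range (n + 1), x ^ i / (Nat.factorial i : ℝ)) ≤
      x - x ^ (n + 1) / (Real.exp 1 * (Nat.factorial (n + 1) : ℝ)) := by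
  set t : ℝ := x ^ (n + 1) / ((n + 1)! : ℝ)
  have htaylor : ∑ i ∈ range (n + 1), x ^ i / (i ! : ℝ) + t ≤ exp x := by
    simpa only [sum_range_succ] using sum_le_exp_of_nonneg hx0 (n + 2)
  have hexp : exp x - t ≤ exp (x - t / exp 1) :=
    exp_sub_le_exp_sub_div (by positivity) (exp_pos 1) (exp_le_exp.mpr hx1)
  have hrhs : x ^ (n + 1) / (exp 1 * ((n + 1)! : ℝ)) = t / exp 1 := by
    rw [div_div, mul_comm]
  rw [hrhs, log_le_iff_le_exp (by linarith [one_le_sum_pow_div_factorial hx0 n])]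
  linarith

theorem stmt_0 (n : ℕ) (hn : 1 ≤ n) (x : ℝ) (hx0 : 0 ≤ x) (hx1 : x ≤ 1) :
    Real.log (∑ i ∈ Finset.range (n + 1), x ^ i / (Nat.factorial i : ℝ)) ≤
      x - x ^ (n + 1) / (Real.exp 1 * (Nat.factorial (n + 1) : ℝ)) :=
  stmt_0_general n x hx0 hx1
end

section
/- For every integer n ≥ 1 and every real x with 0 ≤ x ≤ 1, the derivative of f(x) = log(∑_{i=0}^{n} xⁱ/i!) satisfies f'(x) ≤ 1 − xⁿ/(e·n!). -/
/-! The derivative of `log S_n`, with `S_n(x) = ∑_{i ≤ n} xⁱ/i!`, is `S_{n-1}/S_n = 1 - (xⁿ/n!)/S_n`,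
and on `[0, 1]` the partial sum `S_n(x)` is at most `exp x ≤ e`. -/

open Finset Nat

theorem hasDerivAt_sum_range_succ_pow_div_factorial (n : ℕ) (x : ℝ) :
    HasDerivAt (fun y : ℝ => ∑ i ∈ range (n + 1), y ^ i / (i ! : ℝ))
      (∑ i ∈ range n, x ^ i / (i ! : ℝ)) x := by
  have hterm : ∀ i ∈ range (n + 1),
      HasDerivAt (fun y : ℝ => y ^ i / (i ! : ℝ)) ((i : ℝ) * x ^ (i - 1) / (i ! : ℝ)) x :=
    fun i _ => by simpa using (hasDerivAt_pow i x).div_const (i ! : ℝ)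
  refine (HasDerivAt.fun_sum hterm).congr_deriv ?_
  rw [sum_range_succ']
  simp only [CharP.cast_eq_zero, zero_mul, zero_div, add_zero, Nat.add_sub_cancel]
  refine sum_congr rfl fun i _ => ?_
  rw [factorial_succ, cast_mul, mul_div_mul_left _ _ (by positivity)]

theorem one_le_sum_range_succ_pow_div_factorial (n : ℕ) {x : ℝ} (hx : 0 ≤ x) :
    1 ≤ ∑ i ∈ range (n + 1), x ^ i / (i ! : ℝ) := by
  simpa using single_le_sum (f := fun i => x ^ i / (i ! : ℝ)) (fun i _ => by positivity)
    (mem_range.mpr n.succ_pos)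

theorem hasDerivAt_log_sum_range_succ_pow_div_factorial (n : ℕ) {x : ℝ} (hx : 0 ≤ x) :
    HasDerivAt (fun y : ℝ => Real.log (∑ i ∈ range (n + 1), y ^ i / (i ! : ℝ)))
      (1 - x ^ n / (n ! : ℝ) / ∑ i ∈ range (n + 1), x ^ i / (i ! : ℝ)) x := by
  have hS := one_le_sum_range_succ_pow_div_factorial n hx
  convert (hasDerivAt_sum_range_succ_pow_div_factorial n x).log (by linarith) using 1
  rw [sum_range_succ _ n] at hS ⊢
  generalize ∑ i ∈ range n, x ^ i / (i ! : ℝ) = T, x ^ n / (n ! : ℝ) = t at hS ⊢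
  have : T + t ≠ 0 := by linarith
  field_simp
  ring

theorem stmt_1_general (n : ℕ) (x : ℝ) (hx0 : 0 ≤ x) (hx1 : x ≤ 1) :
    deriv (fun y : ℝ => Real.log (∑ i ∈ Finset.range (n + 1), y ^ i / (Nat.factorial i : ℝ))) x ≤
      1 - x ^ n / (Real.exp 1 * (Nat.factorial n : ℝ)) := by
  rw [(hasDerivAt_log_sum_range_succ_pow_div_factorial n hx0).deriv]
  have hS := one_le_sum_range_succ_pow_div_factorial n hx0
  have hSe : ∑ i ∈ range (n + 1), x ^ i / (i ! : ℝ) ≤ Real.exp 1 :=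
    (Real.sum_le_exp_of_nonneg hx0 _).trans (Real.exp_le_exp.mpr hx1)
  rw [mul_comm, ← div_div]
  gcongr

theorem stmt_1 (n : ℕ) (hn : 1 ≤ n) (x : ℝ) (hx0 : 0 ≤ x) (hx1 : x ≤ 1) :
    deriv (fun y : ℝ => Real.log (∑ i ∈ Finset.range (n + 1), y ^ i / (Nat.factorial i : ℝ))) x ≤
      1 - x ^ n / (Real.exp 1 * (Nat.factorial n : ℝ)) :=
  stmt_1_general n x hx0 hx1
end

section
/- Let β ≥ 1 and n ≥ 1 be integers, and let G be the graph on vertex set [n]^{β+1} where two distinct vertices are adjacent if and only if they agree in at least one coordinate. In every β-frugal proper coloring of G, each color class has size at most β. Consequently, any β-frugal coloring of G uses at least n^{β+1}/β colors. -/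
/-!
A colour class with `β + 1` elements is an independent set; in `[n]^{β+1}` the vertices of an
independent set pairwise differ in every coordinate, so the "diagonal" tuple whose `i`-th
coordinate is taken from the `i`-th vertex is a common neighbour of all `β + 1` of them,
contradicting `β`-frugality. Summing over the colour classes gives `n^{β+1} ≤ β k`.
-/

/-- The graph on `[n]^{β+1}` where two distinct tuples are adjacent iff they agree in at
least one coordinate. -/
def agreeGraph (n β : ℕ) : SimpleGraph (Fin (β + 1) → Fin n) where
  Adj u v := u ≠ v ∧ ∃ i, u i = v i
  symm := ⟨fun _ _ ⟨h, ⟨i, hi⟩⟩ => ⟨h.symm, ⟨i, hi.symm⟩⟩⟩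
  loopless := ⟨fun _ h => h.1 rfl⟩

instance (n β : ℕ) : DecidableRel (agreeGraph n β).Adj :=
  fun u v => inferInstanceAs (Decidable (u ≠ v ∧ ∃ i, u i = v i))

open Finset

namespace SimpleGraph

variable {V C : Type*} [Fintype V] [DecidableEq C] (G : SimpleGraph V) [DecidableRel G.Adj]

theorem card_colorClass_le_of_forall_isIndepSet_exists_common_neighbor {β : ℕ}
    (hcommon : ∀ s : Finset V, #s = β + 1 → G.IsIndepSet (s : Set V) → ∃ w, ∀ u ∈ s, G.Adj w u)
    (c : V → C) (hproper : ∀ u v, G.Adj u v → c u ≠ c v)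
    (hfrugal : ∀ v a, #{u ∈ G.neighborFinset v | c u = a} ≤ β) (a : C) :
    #{v | c v = a} ≤ β := by
  by_contra! hlarge
  obtain ⟨s, hs, hcard⟩ := exists_subset_card_eq (Nat.succ_le_of_lt hlarge)
  have hcolor : ∀ u ∈ s, c u = a := fun u hu => (mem_filter.mp (hs hu)).2
  have hindep : G.IsIndepSet (s : Set V) := fun u hu v hv _ hadj =>
    hproper u v hadj ((hcolor u hu).trans (hcolor v hv).symm)
  obtain ⟨w, hw⟩ := hcommon s hcard hindep
  have hsub : s ⊆ {u ∈ G.neighborFinset w | c u = a} := fun u hu =>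
    mem_filter.mpr ⟨(G.mem_neighborFinset w u).mpr (hw u hu), hcolor u hu⟩
  have := card_le_card hsub
  have := hfrugal w a
  omega

end SimpleGraph

theorem agreeGraph_exists_common_neighbor {n β : ℕ} (hβ : 1 ≤ β)
    (s : Finset (Fin (β + 1) → Fin n)) (hcard : #s = β + 1)
    (hindep : (agreeGraph n β).IsIndepSet (s : Set (Fin (β + 1) → Fin n))) :
    ∃ w, ∀ u ∈ s, (agreeGraph n β).Adj w u := by
  let e := s.equivFinOfCardEq hcard
  refine ⟨fun i => (e.symm i : Fin (β + 1) → Fin n) i, fun u hu => ?_⟩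
  obtain ⟨j, rfl⟩ : ∃ j, (e.symm j : Fin (β + 1) → Fin n) = u := ⟨e ⟨u, hu⟩, by simp⟩
  refine ⟨fun hdiag => ?_, j, rfl⟩
  obtain ⟨i, hij⟩ := Fintype.exists_ne_of_one_lt_card (by simp; omega) j
  have hne : (e.symm i : Fin (β + 1) → Fin n) ≠ e.symm j :=
    fun h => hij (e.symm.injective (Subtype.ext h))
  exact hindep (e.symm i).2 (e.symm j).2 hne ⟨hne, i, congrFun hdiag i⟩

theorem stmt_6_general (n β : ℕ) (hβ : 1 ≤ β) (k : ℕ)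
    (c : (Fin (β + 1) → Fin n) → Fin k)
    (hproper : ∀ u v, (agreeGraph n β).Adj u v → c u ≠ c v)
    (hfrugal : ∀ v (a : Fin k),
      (((agreeGraph n β).neighborFinset v).filter (fun u => c u = a)).card ≤ β) :
    (∀ a : Fin k, (Finset.univ.filter (fun v => c v = a)).card ≤ β) ∧
      ((n : ℝ) ^ (β + 1) / (β : ℝ) ≤ (k : ℝ)) := by
  have hclass : ∀ a : Fin k, #{v | c v = a} ≤ β :=
    (agreeGraph n β).card_colorClass_le_of_forall_isIndepSet_exists_common_neighbor
      (agreeGraph_exists_common_neighbor hβ) c hproper hfrugal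
  refine ⟨hclass, ?_⟩
  have hcount : n ^ (β + 1) ≤ β * k := by
    simpa using card_le_mul_card_image_of_maps_to (s := univ) (t := univ)
      (fun v _ => mem_univ (c v)) β fun a _ => hclass a
  rw [div_le_iff₀ (by exact_mod_cast hβ), mul_comm]
  exact_mod_cast hcount

theorem stmt_6 (n β : ℕ) (hn : 1 ≤ n) (hβ : 1 ≤ β) (k : ℕ)
    (c : (Fin (β + 1) → Fin n) → Fin k)
    (hproper : ∀ u v, (agreeGraph n β).Adj u v → c u ≠ c v)
    (hfrugal : ∀ v (a : Fin k),
      (((agreeGraph n β).neighborFinset v).filter (fun u => c u = a)).card ≤ β) :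
    (∀ a : Fin k, (Finset.univ.filter (fun v => c v = a)).card ≤ β) ∧
      ((n : ℝ) ^ (β + 1) / (β : ℝ) ≤ (k : ℝ)) :=
  stmt_6_general n β hβ k c hproper hfrugal
end

section
/- Let t ≥ 2 and let G be a C_{2t}-free graph of maximum degree Δ ≥ 1. For a vertex u, call a non-adjacent vertex v special (for u) if u and v have more than 2t common neighbors. Then, if σ(u) denotes the set of vertices special for u, we have |σ(u)| < tΔ/t = Δ; in particular every vertex u has fewer than Δ special partners. -/
/-!
Let `A = N(u)` and let `B` be the set of vertices special for `u`. If `|B| ≥ Δ ≥ |A|`, then the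
bipartite graph between `A` and `B` has at least `(2t + 1)|B| > (t - 1)(|A| + |B|)` edges.
Deleting vertices of degree at most `t - 1` one at a time leaves a nonempty bipartite subgraph
in which every vertex has at least `t` neighbours on the other side, and there a greedy search
finds a path `a₁ b₁ a₂ … b_{t-1} a_t` alternating between `A` and `B`. Both ends are neighbours
of `u`, so together with `u` it closes into a cycle of length `2t`.
-/

open Finset

namespace Finset

variable {α β : Type*} (r : α → β → Prop) [∀ a b, Decidable (r a b)] (k : ℕ)

theorem mul_card_add_lt_sum_card_bipartiteAbove {s : Finset α} {t : Finset β}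
    (hst : #s ≤ #t) (ht : t.Nonempty) (hdeg : ∀ b ∈ t, 2 * k + 2 < #(s.bipartiteBelow r b)) :
    k * (#s + #t) < ∑ a ∈ s, #(t.bipartiteAbove r a) := by
  rw [sum_card_bipartiteAbove_eq_sum_card_bipartiteBelow]
  have hsum := card_nsmul_le_sum t _ (2 * k + 3) hdeg
  rw [smul_eq_mul] at hsum
  have := ht.card_pos
  nlinarith

variable [DecidableEq α]

theorem mul_card_add_lt_sum_card_bipartiteAbove_erase {s : Finset α} {t : Finset β} {a : α}
    (ha : a ∈ s) (hdeg : #(t.bipartiteAbove r a) ≤ k)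
    (h : k * (#s + #t) < ∑ x ∈ s, #(t.bipartiteAbove r x)) :
    k * (#(s.erase a) + #t) < ∑ x ∈ s.erase a, #(t.bipartiteAbove r x) := by
  rw [← add_sum_erase _ _ ha, ← card_erase_add_one ha] at h
  have : k * (#(s.erase a) + 1 + #t) = k * (#(s.erase a) + #t) + k := by ring
  omega

variable [DecidableEq β]

theorem exists_subset_lt_card_bipartiteAbove_bipartiteBelow (s : Finset α) (t : Finset β)
    (h : k * (#s + #t) < ∑ a ∈ s, #(t.bipartiteAbove r a)) :
    ∃ s' ⊆ s, ∃ t' ⊆ t, s'.Nonempty ∧ (∀ a ∈ s', k < #(t'.bipartiteAbove r a)) ∧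
      ∀ b ∈ t', k < #(s'.bipartiteBelow r b) := by
  induction hn : #s + #t using Nat.strong_induction_on generalizing s t with
  | _ n ih =>
  by_cases hs : ∃ a ∈ s, #(t.bipartiteAbove r a) ≤ k
  · obtain ⟨a, ha, hdeg⟩ := hs
    obtain ⟨s', hs', t', ht', H⟩ := ih _ (by rw [← hn, ← card_erase_add_one ha]; omega)
      (s.erase a) t (mul_card_add_lt_sum_card_bipartiteAbove_erase r k ha hdeg h) rfl
    exact ⟨s', hs'.trans (erase_subset _ _), t', ht', H⟩
  by_cases ht : ∃ b ∈ t, #(s.bipartiteBelow r b) ≤ k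
  · obtain ⟨b, hb, hdeg⟩ := ht
    rw [sum_card_bipartiteAbove_eq_sum_card_bipartiteBelow, add_comm] at h
    have h' := mul_card_add_lt_sum_card_bipartiteAbove_erase (Function.swap r) k hb hdeg h
    simp only [bipartiteAbove_swap] at h'
    rw [add_comm, ← sum_card_bipartiteAbove_eq_sum_card_bipartiteBelow] at h'
    obtain ⟨s', hs', t', ht', H⟩ := ih _ (by rw [← hn, ← card_erase_add_one hb]; omega)
      s (t.erase b) h' rfl
    exact ⟨s', hs', t', ht'.trans (erase_subset _ _), H⟩
  simp only [not_exists, not_and, not_le] at hs ht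
  refine ⟨s, subset_rfl, t, subset_rfl, ?_, hs, ht⟩
  rw [nonempty_iff_ne_empty]
  rintro rfl
  simp at h

end Finset

namespace SimpleGraph

variable {V : Type*} (G : SimpleGraph V)

theorem exists_cycle_of_isChain {l : List V} (hnd : l.Nodup) (hl : l.IsChain G.Adj)
    (hclose : ∀ x ∈ l.getLast?, ∀ y ∈ l.head?, G.Adj x y) {n : ℕ} [NeZero n]
    (hn : l.length = n) :
    ∃ f : ZMod n → V, Function.Injective f ∧ ∀ i, G.Adj (f i) (f (i + 1)) := by
  subst hn
  refine ⟨fun i => l[i.val]'(ZMod.val_lt i), fun i j hij => ZMod.val_injective _ ?_, fun i => ?_⟩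
  · exact hnd.getElem_inj_iff.1 hij
  have hsucc : (i + 1).val = (i.val + 1) % l.length := by
    rw [ZMod.val_add, ZMod.val_one_eq_one_mod, Nat.add_mod_mod]
  by_cases hlt : i.val + 1 < l.length
  · simp only [hsucc, Nat.mod_eq_of_lt hlt]
    exact hl.getElem _ hlt
  · have hlast : i.val + 1 = l.length := by have := ZMod.val_lt i; omega
    simp only [hsucc, hlast, Nat.mod_self]
    apply hclose
    · rw [List.getLast?_eq_getElem?]; simp [← hlast]
    · rw [List.head?_eq_getElem?]; simp

variable [DecidableEq V] (A B : Finset V)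

-- Alternation between `A` and `B` is recorded only through the two counts, which is all the
-- greedy extension needs.
structure IsAlternatingPath (m : ℕ) (l : List V) : Prop where
  length_eq : l.length = 2 * m + 1
  nodup : l.Nodup
  isChain : l.IsChain G.Adj
  mem_union : ∀ x ∈ l, x ∈ A ∪ B
  head_mem : ∀ x ∈ l.head?, x ∈ A
  getLast_mem : ∀ x ∈ l.getLast?, x ∈ A
  card_inter_left : #(l.toFinset ∩ A) ≤ m + 1
  card_inter_right : #(l.toFinset ∩ B) ≤ m

variable {G A B} {k m : ℕ}

theorem IsAlternatingPath.exists_cycle {u : V} {l : List V} (hl : G.IsAlternatingPath A B k l)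
    (hA : ∀ a ∈ A, G.Adj u a) (hu : u ∉ A ∪ B) :
    ∃ f : ZMod (2 * (k + 1)) → V, Function.Injective f ∧ ∀ i, G.Adj (f i) (f (i + 1)) := by
  have : NeZero (2 * (k + 1)) := ⟨by omega⟩
  refine G.exists_cycle_of_isChain (l := u :: l)
    (List.nodup_cons.2 ⟨fun h => hu (hl.mem_union u h), hl.nodup⟩)
    (hl.isChain.cons fun y hy => hA y (hl.head_mem y hy)) ?_ (by simp [hl.length_eq]; ring)
  obtain ⟨a, l', rfl⟩ := List.exists_cons_of_length_eq_add_one hl.length_eq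
  intro x hx y hy
  rw [List.getLast?_cons_cons] at hx
  rw [List.head?_cons, Option.mem_some_iff] at hy
  exact hy ▸ (hA x (hl.getLast_mem x hx)).symm

variable [DecidableRel G.Adj]

theorem IsAlternatingPath.exists_extend {l : List V} (hl : G.IsAlternatingPath A B m l)
    (hAB : Disjoint A B) (hA : ∀ a ∈ A, k < #(B.bipartiteAbove G.Adj a))
    (hB : ∀ b ∈ B, k < #(A.bipartiteBelow G.Adj b)) (hm : m < k) :
    ∃ l', G.IsAlternatingPath A B (m + 1) l' := by
  obtain ⟨hlen, hnd, hchain, hmem, hhead, hlast, hcardA, hcardB⟩ := hl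
  obtain ⟨a, l, rfl⟩ := List.exists_cons_of_length_eq_add_one hlen
  have ha : a ∈ A := hhead a rfl
  obtain ⟨b, hb, hbl⟩ := exists_mem_notMem_of_card_lt_card
    (by have := hA a ha; omega : #((a :: l).toFinset ∩ B) < #(B.bipartiteAbove G.Adj a))
  obtain ⟨hbB, hab⟩ := (mem_bipartiteAbove G.Adj).1 hb
  obtain ⟨a', ha', ha'l⟩ := exists_mem_notMem_of_card_lt_card
    (by have := hB b hbB; omega : #((a :: l).toFinset ∩ A) < #(A.bipartiteBelow G.Adj b))
  obtain ⟨ha'A, ha'b⟩ := (mem_bipartiteBelow G.Adj).1 ha'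
  have hbA : b ∉ A := Finset.disjoint_right.1 hAB hbB
  have ha'B : a' ∉ B := Finset.disjoint_left.1 hAB ha'A
  have hbl' : b ∉ a :: l := fun h => hbl (mem_inter.2 ⟨List.mem_toFinset.2 h, hbB⟩)
  have ha'l' : a' ∉ a :: l := fun h => ha'l (mem_inter.2 ⟨List.mem_toFinset.2 h, ha'A⟩)
  refine ⟨a' :: b :: a :: l, ⟨by simp [hlen]; ring, ?_, (hchain.cons_cons hab.symm).cons_cons ha'b,
    ?_, by simpa, by simpa using hlast, ?_, ?_⟩⟩
  · have hne : a' ≠ b := fun h => ha'B (h ▸ hbB)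
    exact List.nodup_cons.2 ⟨by simp [hne, ha'l'], List.nodup_cons.2 ⟨hbl', hnd⟩⟩
  · rw [List.forall_mem_cons, List.forall_mem_cons]
    exact ⟨mem_union_left _ ha'A, mem_union_right _ hbB, hmem⟩
  · rw [List.toFinset_cons, List.toFinset_cons, insert_inter_of_mem ha'A,
      insert_inter_of_notMem hbA]
    exact (card_insert_le _ _).trans (by omega)
  · rw [List.toFinset_cons, List.toFinset_cons, insert_inter_of_notMem ha'B,
      insert_inter_of_mem hbB]
    exact (card_insert_le _ _).trans (by omega)

theorem exists_isAlternatingPath (hAB : Disjoint A B)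
    (hA : ∀ a ∈ A, k < #(B.bipartiteAbove G.Adj a))
    (hB : ∀ b ∈ B, k < #(A.bipartiteBelow G.Adj b)) (hne : A.Nonempty) (hm : m ≤ k) :
    ∃ l, G.IsAlternatingPath A B m l := by
  induction m with
  | zero =>
    obtain ⟨a, ha⟩ := hne
    exact ⟨[a], ⟨rfl, List.nodup_singleton a, List.isChain_singleton a, by simp [ha],
      by simpa, by simpa, by simp [singleton_inter_of_mem ha],
      by simp [Finset.disjoint_left.1 hAB ha]⟩⟩
  | succ m ih =>
    obtain ⟨l, hl⟩ := ih (by omega)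
    exact hl.exists_extend hAB hA hB hm

end SimpleGraph

open SimpleGraph in
theorem stmt_10 {V : Type*} [Fintype V] [DecidableEq V] (G : SimpleGraph V)
    [DecidableRel G.Adj] (t Δ : ℕ) (ht : 2 ≤ t) (hΔ : 1 ≤ Δ)
    (hdeg : ∀ v, G.degree v ≤ Δ)
    (hfree : ¬ ∃ f : ZMod (2 * t) → V, Function.Injective f ∧
      ∀ i : ZMod (2 * t), G.Adj (f i) (f (i + 1))) (u : V) :
    (Finset.univ.filter (fun v => v ≠ u ∧ ¬ G.Adj u v ∧
      2 * t < (G.neighborFinset u ∩ G.neighborFinset v).card)).card < Δ := by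
  by_contra! hσ
  obtain ⟨k, rfl⟩ : ∃ k, t = k + 1 := ⟨t - 1, by omega⟩
  set A := G.neighborFinset u
  set B := Finset.univ.filter (fun v => v ≠ u ∧ ¬ G.Adj u v ∧
      2 * (k + 1) < (G.neighborFinset u ∩ G.neighborFinset v).card)
  have hAB : Disjoint A B := Finset.disjoint_left.2 fun x hxA hxB =>
    (mem_filter.1 hxB).2.2.1 ((mem_neighborFinset G u x).1 hxA)
  have hcommon : ∀ b ∈ B, 2 * k + 2 < #(A.bipartiteBelow G.Adj b) := by
    intro b hb
    have : A.bipartiteBelow G.Adj b = A ∩ G.neighborFinset b := by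
      ext x; simp [mem_bipartiteBelow, G.adj_comm x b]
    exact this ▸ (mem_filter.1 hb).2.2.2
  have hcard : #A ≤ #B := (card_neighborFinset_eq_degree G u ▸ hdeg u).trans hσ
  obtain ⟨A', hA', B', hB', hne, hdA, hdB⟩ := exists_subset_lt_card_bipartiteAbove_bipartiteBelow
    G.Adj k A B (mul_card_add_lt_sum_card_bipartiteAbove G.Adj k hcard
      (card_pos.1 (hΔ.trans hσ)) hcommon)
  obtain ⟨l, hl⟩ := exists_isAlternatingPath (hAB.mono hA' hB') hdA hdB hne le_rfl
  refine hfree (hl.exists_cycle (fun a ha => (mem_neighborFinset G u a).1 (hA' ha)) ?_)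
  rintro hu
  rcases mem_union.1 hu with huA | huB
  · exact G.irrefl ((mem_neighborFinset G u u).1 (hA' huA))
  · exact (mem_filter.1 (hB' huB)).2.1 rfl
end

section
/- Let t ≥ 2 and let G be a C_{2t}-free graph. Let u be a vertex and σ(u) the set of vertices v non-adjacent to u with |N(u) ∩ N(v)| > 2t. Then the bipartite graph H between N(u) and σ(u) induced by edges of G contains no path on 2t vertices as a subgraph. -/
/-!
Since `σ(u)` avoids `u` and `N(u)`, a path in `H` alternates between `N(u)` and `σ(u)`. Of a path
on `2t` vertices, therefore, the first or the last `2t - 1` vertices form a path with both ends in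
`N(u)`, and `u` closes it into a `2t`-cycle.
-/

open Function

theorem Fin.mem_iff_even_of_alternating {α : Type*} {m : ℕ} {p : Fin (m + 1) → α} {A : Set α}
    (halt : ∀ i : Fin m, p i.castSucc ∈ A ↔ p i.succ ∉ A) (i : Fin (m + 1)) :
    p i ∈ A ↔ (p 0 ∈ A ↔ Even (i : ℕ)) := by
  induction i using Fin.induction with
  | zero => simp
  | succ i ih =>
    rw [Fin.val_castSucc] at ih
    rw [Fin.val_succ, Nat.even_add_one, ← not_iff_not, ← halt i]
    tauto

namespace SimpleGraph
variable {V : Type*} (G : SimpleGraph V)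

theorem exists_zmod_cycle_of_path_of_adj_ends {m : ℕ} {p : Fin (m + 1) → V} (hp : Injective p)
    (hadj : ∀ i : Fin m, G.Adj (p i.castSucc) (p i.succ)) {u : V} (hu : u ∉ Set.range p)
    (h0 : G.Adj u (p 0)) (hlast : G.Adj (p (Fin.last m)) u) :
    ∃ g : ZMod (m + 2) → V, Injective g ∧ ∀ i, G.Adj (g i) (g (i + 1)) := by
  -- `ZMod (m + 2)` is `Fin (m + 2)` by definition, so the cycle can be built with `Fin.snoc`.
  let g : Fin (m + 2) → V := Fin.snoc p u
  have hcycle (i : Fin (m + 2)) : G.Adj (g i) (g (i + 1)) := by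
    induction i using Fin.lastCases with
    | last => simpa [g, Fin.last_add_one] using h0
    | cast j =>
      rw [Fin.coeSucc_eq_succ]
      induction j using Fin.lastCases with
      | last => simpa [g] using hlast
      | cast k => simpa only [g, Fin.succ_castSucc, Fin.snoc_castSucc] using hadj k
  exact ⟨g, Fin.snoc_injective_of_injective hp hu, hcycle⟩

theorem exists_zmod_cycle_of_alternating_path {m : ℕ} (hm : Even m) {u : V} {S : Set V}
    (hS : ∀ v ∈ S, v ≠ u ∧ ¬ G.Adj u v) {p : Fin (m + 2) → V} (hp : Injective p)
    (hedge : ∀ i : Fin (m + 1), G.Adj (p i.castSucc) (p i.succ) ∧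
      (p i.castSucc ∈ G.neighborSet u ∧ p i.succ ∈ S ∨
        p i.castSucc ∈ S ∧ p i.succ ∈ G.neighborSet u)) :
    ∃ g : ZMod (m + 2) → V, Injective g ∧ ∀ i, G.Adj (g i) (g (i + 1)) := by
  have hne (v : V) (hv : v ∈ G.neighborSet u ∨ v ∈ S) : v ≠ u := by
    rcases hv with hv | hv
    · exact (G.ne_of_adj hv).symm
    · exact (hS v hv).1
  have hu : u ∉ Set.range p := by
    rintro ⟨j, hj⟩
    induction j using Fin.cases with
    | zero =>
      have h := (hedge 0).2
      rw [Fin.castSucc_zero] at h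
      exact hne _ (by tauto) hj
    | succ k =>
      have h := (hedge k).2
      exact hne _ (by tauto) hj
  have halt (i : Fin (m + 1)) : p i.castSucc ∈ G.neighborSet u ↔ p i.succ ∉ G.neighborSet u := by
    rcases (hedge i).2 with ⟨h1, h2⟩ | ⟨h1, h2⟩
    · exact iff_of_true h1 fun h => (hS _ h2).2 h
    · exact iff_of_false (hS _ h1).2 (not_not_intro h2)
  have hparity := Fin.mem_iff_even_of_alternating halt
  by_cases h0 : p 0 ∈ G.neighborSet u
  · refine G.exists_zmod_cycle_of_path_of_adj_ends (hp.comp (Fin.castSucc_injective _))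
      (fun i => ?_) (fun ⟨j, hj⟩ => hu ⟨_, hj⟩) h0 (G.adj_symm ?_)
    · simpa only [comp_apply, Fin.succ_castSucc] using (hedge i.castSucc).1
    · simpa [h0, hm] using hparity (Fin.last m).castSucc
  · refine G.exists_zmod_cycle_of_path_of_adj_ends (hp.comp (Fin.succ_injective _))
      (fun i => ?_) (fun ⟨j, hj⟩ => hu ⟨_, hj⟩) ?_ (G.adj_symm ?_)
    · simpa only [comp_apply, Fin.succ_castSucc] using (hedge i.succ).1
    · simpa [h0] using hparity 1
    · simpa [h0, hm, Nat.even_add_one] using hparity (Fin.last (m + 1))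

end SimpleGraph

theorem stmt_11 {V : Type*} [Fintype V] [DecidableEq V] (G : SimpleGraph V)
    [DecidableRel G.Adj] (t : ℕ) (ht : 2 ≤ t)
    (hfree : ¬ ∃ f : ZMod (2 * t) → V, Function.Injective f ∧
      ∀ i : ZMod (2 * t), G.Adj (f i) (f (i + 1)))
    (u : V) (σ : Set V)
    (hσ : σ = {v | v ≠ u ∧ ¬ G.Adj u v ∧
      2 * t < (G.neighborFinset u ∩ G.neighborFinset v).card}) :
    ¬ ∃ f : Fin (2 * t) → V, Function.Injective f ∧
      ∀ (i : ℕ) (h : i + 1 < 2 * t),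
        G.Adj (f ⟨i, Nat.lt_of_succ_lt h⟩) (f ⟨i + 1, h⟩) ∧
        ((f ⟨i, Nat.lt_of_succ_lt h⟩ ∈ G.neighborSet u ∧ f ⟨i + 1, h⟩ ∈ σ) ∨
          (f ⟨i, Nat.lt_of_succ_lt h⟩ ∈ σ ∧ f ⟨i + 1, h⟩ ∈ G.neighborSet u)) := by
  rintro ⟨q, hq_inj, hq⟩
  obtain ⟨m, hm⟩ : ∃ m, 2 * t = m + 2 := ⟨2 * t - 2, by omega⟩
  rw [hm] at hfree
  have hS : ∀ v ∈ σ, v ≠ u ∧ ¬ G.Adj u v := by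
    subst hσ
    exact fun v hv => ⟨hv.1, hv.2.1⟩
  exact hfree <| G.exists_zmod_cycle_of_alternating_path ⟨t - 1, by omega⟩ hS
    (hq_inj.comp (Fin.cast_injective hm.symm)) fun i => hq i (by omega)
end

section
/- Kővári–Sós–Turán bound: for integers a ≥ s ≥ 2 and b ≥ t ≥ 2, every bipartite graph with parts A of size a and B of size b that contains no copy of K_{s,t} with the s-side in A and the t-side in B has at most (t−1)^{1/s}·(a−s+1)·b^{1−1/s} + (s−1)·b edges. -/
/-!
Let `d y` be the degree of `y ∈ B`. Counting pairs (`s`-subset `S` of `A`, common neighbour of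
`S`) in two ways gives `∑ C(d y, s) ≤ (t - 1) C(a, s)`, since no `s`-set has `t` common neighbours.
Comparing descending factorials factor by factor,
`C(d, s) / C(a, s) ≥ ((d - s + 1) / (a - s + 1)) ^ s`, so with `e y = max (d y - s + 1) 0` we get
`∑ e y ^ s ≤ (t - 1) (a - s + 1) ^ s`. The power mean inequality
`(∑ e y) ^ s ≤ b ^ (s - 1) ∑ e y ^ s` and `d y ≤ e y + (s - 1)` finish the bound.
-/

open Finset

-- The difference of the two sides is `(a - d) (s - 1 - i) ≥ 0`.
theorem Nat.sub_mul_sub_le_sub_mul_sub {a d i s : ℕ} (hi : i < s) (hd : d ≤ a) :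
    (d - (s - 1)) * (a - i) ≤ (a - (s - 1)) * (d - i) := by
  rcases le_or_gt d (s - 1) with h | h
  · simp [Nat.sub_eq_zero_of_le h]
  · have hi' : i ≤ s - 1 := Nat.le_sub_one_of_lt hi
    zify [Nat.one_le_of_lt hi, h.le, h.le.trans hd, hi'.trans h.le, hi'.trans (h.le.trans hd)]
      at hi' hd ⊢
    nlinarith

-- Truncated subtraction: `d - (s - 1)` is `max (d - s + 1) 0`.
theorem Nat.sub_pow_mul_choose_le_choose_mul_sub_pow {a d s : ℕ} (hd : d ≤ a) :
    (d - (s - 1)) ^ s * a.choose s ≤ d.choose s * (a - (s - 1)) ^ s := by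
  refine Nat.le_of_mul_le_mul_left ?_ s.factorial_pos
  calc s.factorial * ((d - (s - 1)) ^ s * a.choose s)
      = ∏ i ∈ range s, (d - (s - 1)) * (a - i) := by
        rw [prod_mul_distrib, prod_const, card_range, ← descFactorial_eq_prod_range,
          descFactorial_eq_factorial_mul_choose]; ring
    _ ≤ ∏ i ∈ range s, (a - (s - 1)) * (d - i) :=
        prod_le_prod' fun i hi => sub_mul_sub_le_sub_mul_sub (mem_range.1 hi) hd
    _ = s.factorial * (d.choose s * (a - (s - 1)) ^ s) := by
        rw [prod_mul_distrib, prod_const, card_range, ← descFactorial_eq_prod_range,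
          descFactorial_eq_factorial_mul_choose]; ring

theorem Real.le_rpow_mul_mul_rpow_of_pow_le {x k c b : ℝ} {s : ℕ} (hs : s ≠ 0) (hx : 0 ≤ x)
    (hk : 0 ≤ k) (hc : 0 ≤ c) (hb : 0 ≤ b) (h : x ^ s ≤ k * c ^ s * b ^ (s - 1)) :
    x ≤ k ^ (1 / s : ℝ) * c * b ^ (1 - 1 / s : ℝ) := by
  have hs' : (s : ℝ) ≠ 0 := by exact_mod_cast hs
  refine (pow_le_pow_iff_left₀ hx (by positivity) hs).1 (h.trans_eq ?_)
  rw [mul_pow, mul_pow, ← rpow_natCast (k ^ _), ← rpow_natCast (b ^ _), ← rpow_mul hk,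
    ← rpow_mul hb, one_div_mul_cancel hs', rpow_one, sub_mul, one_div_mul_cancel hs', one_mul,
    ← Nat.cast_pred (Nat.pos_of_ne_zero hs), rpow_natCast]

namespace KovariSosTuran

variable {α β : Type*}

def NoCompleteBipartite (A : Finset α) (B : Finset β) (r : α → β → Prop) (s t : ℕ) : Prop :=
  ¬ ∃ (S : Finset α) (T : Finset β), S ⊆ A ∧ T ⊆ B ∧ #S = s ∧ #T = t ∧ ∀ x ∈ S, ∀ y ∈ T, r x y

variable {A : Finset α} {B : Finset β} {r : α → β → Prop} [∀ x y, Decidable (r x y)] {s t : ℕ}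

lemma ncard_setOf_rel_eq_sum_card_bipartiteBelow :
    {p : α × β | p.1 ∈ A ∧ p.2 ∈ B ∧ r p.1 p.2}.ncard = ∑ y ∈ B, #(A.bipartiteBelow r y) := by
  have h : {p : α × β | p.1 ∈ A ∧ p.2 ∈ B ∧ r p.1 p.2} = ↑{p ∈ A ×ˢ B | r p.1 p.2} := by
    ext p; simp [and_assoc]
  rw [h, Set.ncard_coe_finset, card_filter, sum_product_right]
  exact sum_congr rfl fun y _ => (card_filter _ _).symm

lemma card_filter_forall_rel_lt
    (hfree : NoCompleteBipartite A B r s t) {S : Finset α} (hSA : S ⊆ A) (hS : #S = s) :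
    #{y ∈ B | ∀ x ∈ S, r x y} < t := by
  by_contra! h
  obtain ⟨T, hT, hTt⟩ := exists_subset_card_eq h
  exact hfree ⟨S, T, hSA, hT.trans (filter_subset _ _), hS, hTt,
    fun x hx y hy => (mem_filter.1 (hT hy)).2 x hx⟩

lemma bipartiteBelow_powersetCard (y : β) :
    (A.powersetCard s).bipartiteBelow (fun S y ↦ ∀ x ∈ S, r x y) y =
      (A.bipartiteBelow r y).powersetCard s := by
  ext S
  simp only [mem_bipartiteBelow, mem_powersetCard, subset_iff]
  aesop

lemma sum_choose_card_bipartiteBelow_eq :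
    ∑ y ∈ B, (#(A.bipartiteBelow r y)).choose s =
      ∑ S ∈ A.powersetCard s, #{y ∈ B | ∀ x ∈ S, r x y} := by
  simp_rw [← card_powersetCard, ← bipartiteBelow_powersetCard]
  exact (sum_card_bipartiteAbove_eq_sum_card_bipartiteBelow _).symm

lemma sum_choose_card_bipartiteBelow_le
    (hfree : NoCompleteBipartite A B r s t) :
    ∑ y ∈ B, (#(A.bipartiteBelow r y)).choose s ≤ (t - 1) * (#A).choose s := by
  rw [sum_choose_card_bipartiteBelow_eq, ← card_powersetCard, mul_comm, ← smul_eq_mul,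
    ← sum_const]
  refine sum_le_sum fun S hS => ?_
  have := card_filter_forall_rel_lt hfree (mem_powersetCard.1 hS).1 (mem_powersetCard.1 hS).2
  omega

lemma sum_card_bipartiteBelow_sub_pow_le
    (hfree : NoCompleteBipartite A B r s t) (hsA : s ≤ #A) :
    ∑ y ∈ B, (#(A.bipartiteBelow r y) - (s - 1)) ^ s ≤ (t - 1) * (#A - (s - 1)) ^ s := by
  refine Nat.le_of_mul_le_mul_right ?_ (Nat.choose_pos hsA)
  calc (∑ y ∈ B, (#(A.bipartiteBelow r y) - (s - 1)) ^ s) * (#A).choose s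
      ≤ (∑ y ∈ B, (#(A.bipartiteBelow r y)).choose s) * (#A - (s - 1)) ^ s := by
        simp_rw [sum_mul]
        exact sum_le_sum fun y _ =>
          Nat.sub_pow_mul_choose_le_choose_mul_sub_pow (card_le_card (filter_subset _ _))
    _ ≤ (t - 1) * (#A).choose s * (#A - (s - 1)) ^ s := by
        gcongr; exact sum_choose_card_bipartiteBelow_le hfree
    _ = (t - 1) * (#A - (s - 1)) ^ s * (#A).choose s := by ring

lemma pow_sum_card_bipartiteBelow_sub_le
    (hfree : NoCompleteBipartite A B r s t) (hs : s ≠ 0) (hsA : s ≤ #A) :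
    (∑ y ∈ B, (#(A.bipartiteBelow r y) - (s - 1))) ^ s ≤
      (t - 1) * (#A - (s - 1)) ^ s * #B ^ (s - 1) := by
  obtain ⟨n, rfl⟩ := Nat.exists_eq_add_one_of_ne_zero hs
  calc _ ≤ #B ^ n * ∑ y ∈ B, (#(A.bipartiteBelow r y) - n) ^ (n + 1) :=
        pow_sum_le_card_mul_sum_pow (fun _ _ => Nat.zero_le _) n
    _ ≤ #B ^ n * ((t - 1) * (#A - n) ^ (n + 1)) := by
        gcongr; exact sum_card_bipartiteBelow_sub_pow_le hfree hsA
    _ = _ := by rw [Nat.add_sub_cancel]; ring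

end KovariSosTuran

open KovariSosTuran in
theorem stmt_12_general {α β : Type*} (A : Finset α) (B : Finset β) (r : α → β → Prop)
    (a b s t : ℕ) (hA : A.card = a) (hB : B.card = b)
    (hs : 2 ≤ s) (hsa : s ≤ a) (ht : 2 ≤ t)
    (hfree : ¬ ∃ (S : Finset α) (T : Finset β), S ⊆ A ∧ T ⊆ B ∧ S.card = s ∧ T.card = t ∧
      ∀ x ∈ S, ∀ y ∈ T, r x y) :
    ({p : α × β | p.1 ∈ A ∧ p.2 ∈ B ∧ r p.1 p.2}.ncard : ℝ) ≤
      ((t : ℝ) - 1) ^ ((1 : ℝ) / s) * ((a : ℝ) - s + 1) * (b : ℝ) ^ (1 - (1 : ℝ) / s) +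
        ((s : ℝ) - 1) * b := by
  classical
  subst hA hB
  have hs1 : 1 ≤ s := by omega
  set X := ∑ y ∈ B, (#(A.bipartiteBelow r y) - (s - 1))
  have hedges : {p : α × β | p.1 ∈ A ∧ p.2 ∈ B ∧ r p.1 p.2}.ncard ≤ X + (s - 1) * #B := by
    rw [ncard_setOf_rel_eq_sum_card_bipartiteBelow]
    calc _ ≤ ∑ y ∈ B, ((#(A.bipartiteBelow r y) - (s - 1)) + (s - 1)) :=
          sum_le_sum fun y _ => by omega
      _ = _ := by rw [sum_add_distrib, sum_const, smul_eq_mul, mul_comm]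
  have ht1 : ((t - 1 : ℕ) : ℝ) = t - 1 := Nat.cast_pred (by omega)
  have hs1_cast : ((s - 1 : ℕ) : ℝ) = s - 1 := Nat.cast_pred hs1
  have hc : ((#A - (s - 1) : ℕ) : ℝ) = #A - s + 1 := by
    rw [Nat.cast_sub (by omega), hs1_cast]; ring
  have hXs : (X : ℝ) ^ s ≤ ((t : ℝ) - 1) * (#A - s + 1) ^ s * #B ^ (s - 1) := by
    rw [← ht1, ← hc]; exact_mod_cast pow_sum_card_bipartiteBelow_sub_le hfree (by omega) hsa
  have hX := Real.le_rpow_mul_mul_rpow_of_pow_le (by omega) X.cast_nonneg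
    (by rw [← ht1]; positivity) (by rw [← hc]; positivity) (#B).cast_nonneg hXs
  calc _ ≤ (X : ℝ) + ((s : ℝ) - 1) * #B := by
        rw [← hs1_cast]; exact_mod_cast hedges
    _ ≤ _ := by linarith

theorem stmt_12 {α β : Type*} (A : Finset α) (B : Finset β) (r : α → β → Prop)
    (a b s t : ℕ) (hA : A.card = a) (hB : B.card = b)
    (hs : 2 ≤ s) (hsa : s ≤ a) (ht : 2 ≤ t) (htb : t ≤ b)
    (hfree : ¬ ∃ (S : Finset α) (T : Finset β), S ⊆ A ∧ T ⊆ B ∧ S.card = s ∧ T.card = t ∧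
      ∀ x ∈ S, ∀ y ∈ T, r x y) :
    ({p : α × β | p.1 ∈ A ∧ p.2 ∈ B ∧ r p.1 p.2}.ncard : ℝ) ≤
      ((t : ℝ) - 1) ^ ((1 : ℝ) / s) * ((a : ℝ) - s + 1) * (b : ℝ) ^ (1 - (1 : ℝ) / s) +
        ((s : ℝ) - 1) * b :=
  stmt_12_general A B r a b s t hA hB hs hsa ht hfree
end

section
/- Let X₁, ..., X_t be independent Bernoulli(p) random variables with 0 < p < 1, and suppose 0 < tp ≤ 1 and t ≥ β ≥ 1. Then P(X₁ + ... + X_t ≤ β) ≤ exp(βp − (tp)^{β+1}/(e·(β+1)!)). -/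
/-!
Splitting the event according to the set of indices where `X i = 1` and using independence,
`P(∑ X i ≤ β) = ∑_{k ≤ β} C(t,k) p^k (1-p)^(t-k)`. Bounding `C(t,k) ≤ t^k / k!` and
`(1-p)^(t-k) ≤ (1-p)^(t-β) ≤ e^(-(t-β)p)` leaves `e^(-(t-β)p) ∑_{k ≤ β} (tp)^k / k!`. For
`x = tp ≤ 1` the truncated exponential series misses at least the term
`x^(β+1) / (β+1)! ≥ e^x x^(β+1) / (e (β+1)!)`, so it is at most `e^(x - x^(β+1) / (e (β+1)!))`.
-/

open MeasureTheory ProbabilityTheory Finset Real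

section ZeroOne

variable {ι : Type*} [Fintype ι]

lemma sum_eq_card_filter_eq_one {f : ι → ℝ} (hf : ∀ i, f i = 0 ∨ f i = 1) :
    ∑ i, f i = #{i | f i = 1} := by
  rw [card_filter, Nat.cast_sum]
  refine sum_congr rfl fun i _ => ?_
  rcases hf i with h | h <;> simp [h]

variable [DecidableEq ι]

lemma forall_eq_ite_mem_iff {f : ι → ℝ} (hf : ∀ i, f i = 0 ∨ f i = 1) (A : Finset ι) :
    (∀ i, f i = if i ∈ A then 1 else 0) ↔ ({i | f i = 1} : Finset ι) = A := by
  simp only [Finset.ext_iff, mem_filter, mem_univ, true_and]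
  refine forall_congr' fun i => ?_
  rcases hf i with h | h <;> by_cases hi : i ∈ A <;> simp [h, hi]

lemma setOf_sum_le_eq_biUnion {Ω : Type*} {X : ι → Ω → ℝ}
    (hbern : ∀ i ω, X i ω = 0 ∨ X i ω = 1) (β : ℕ) :
    {ω | ∑ i, X i ω ≤ β} = ⋃ A ∈ ({A | #A ≤ β} : Finset (Finset ι)),
      ⋂ i, X i ⁻¹' {if i ∈ A then 1 else 0} := by
  ext ω
  simp only [Set.mem_ofPred_eq, Set.mem_iUnion, Set.mem_iInter, Set.mem_preimage,
    Set.mem_singleton_iff, mem_filter, mem_univ, true_and, exists_prop,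
    forall_eq_ite_mem_iff (hbern · ω), sum_eq_card_filter_eq_one (hbern · ω)]
  exact ⟨fun h => ⟨_, by exact_mod_cast h, rfl⟩,
    fun ⟨A, hA, hωA⟩ => by rw [hωA]; exact_mod_cast hA⟩

end ZeroOne

section Bernoulli

variable {Ω ι : Type*} [MeasurableSpace Ω] {μ : Measure Ω} [IsProbabilityMeasure μ]
  {X : ι → Ω → ℝ} {p : ℝ}

lemma measure_preimage_zero_eq (hmeas : ∀ i, Measurable (X i))
    (hbern : ∀ i ω, X i ω = 0 ∨ X i ω = 1) (hp : ∀ i, μ {ω | X i ω = 1} = ENNReal.ofReal p)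
    (hp0 : 0 ≤ p) (i : ι) : μ (X i ⁻¹' {0}) = ENNReal.ofReal (1 - p) := by
  have hcompl : X i ⁻¹' {0} = {ω | X i ω = 1}ᶜ := by
    ext ω
    rcases hbern i ω with h | h <;> simp [h]
  rw [hcompl, prob_compl_eq_one_sub (s := {ω | X i ω = 1})
    (hmeas i (measurableSet_singleton 1)), hp i, ENNReal.ofReal_sub _ hp0, ENNReal.ofReal_one]

variable [Fintype ι] [DecidableEq ι]

lemma measure_iInter_preimage_ite_mem (hmeas : ∀ i, Measurable (X i)) (hind : iIndepFun X μ)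
    (hbern : ∀ i ω, X i ω = 0 ∨ X i ω = 1) (hp : ∀ i, μ {ω | X i ω = 1} = ENNReal.ofReal p)
    (hp0 : 0 ≤ p) (hp1 : p ≤ 1) (A : Finset ι) :
    μ (⋂ i, X i ⁻¹' {if i ∈ A then 1 else 0}) =
      ENNReal.ofReal (p ^ #A * (1 - p) ^ (Fintype.card ι - #A)) := by
  have hfactor (i : ι) : μ (X i ⁻¹' {if i ∈ A then 1 else 0}) =
      if i ∈ A then ENNReal.ofReal p else ENNReal.ofReal (1 - p) := by
    split_ifs
    · exact hp i
    · exact measure_preimage_zero_eq hmeas hbern hp hp0 i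
  rw [hind.meas_iInter fun i => ⟨_, measurableSet_singleton _, rfl⟩]
  simp_rw [hfactor]
  rw [prod_ite, prod_const, prod_const, filter_mem_eq_inter, univ_inter, filter_not,
    filter_mem_eq_inter, univ_inter, ← compl_eq_univ_sdiff, card_compl,
    ENNReal.ofReal_mul (by positivity), ENNReal.ofReal_pow hp0,
    ENNReal.ofReal_pow (sub_nonneg.mpr hp1)]

lemma measure_sum_le_eq_sum_choose (hmeas : ∀ i, Measurable (X i)) (hind : iIndepFun X μ)
    (hbern : ∀ i ω, X i ω = 0 ∨ X i ω = 1) (hp : ∀ i, μ {ω | X i ω = 1} = ENNReal.ofReal p)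
    (hp0 : 0 ≤ p) (hp1 : p ≤ 1) (β : ℕ) :
    μ {ω | ∑ i, X i ω ≤ β} =
      ENNReal.ofReal (∑ k ∈ range (Fintype.card ι + 1) with k ≤ β,
        (Fintype.card ι).choose k * p ^ k * (1 - p) ^ (Fintype.card ι - k)) := by
  have hdisj : Set.PairwiseDisjoint (({A | #A ≤ β} : Finset (Finset ι)) : Set (Finset ι))
      fun A => ⋂ i, X i ⁻¹' {if i ∈ A then 1 else 0} := by
    intro A _ B _ hAB
    refine Set.disjoint_left.mpr fun ω hA hB => hAB ?_
    simp only [Set.mem_iInter, Set.mem_preimage, Set.mem_singleton_iff,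
      forall_eq_ite_mem_iff (hbern · ω)] at hA hB
    rw [← hA, ← hB]
  rw [setOf_sum_le_eq_biUnion hbern, measure_biUnion_finset hdisj
      fun A _ => MeasurableSet.iInter fun i => hmeas i (measurableSet_singleton _)]
  simp_rw [measure_iInter_preimage_ite_mem hmeas hind hbern hp hp0 hp1]
  rw [← ENNReal.ofReal_sum_of_nonneg fun A _ => by have := sub_nonneg.mpr hp1; positivity]
  congr 1
  rw [sum_filter, ← powerset_univ,
    sum_powerset_apply_card (fun k => if k ≤ β then p ^ k * (1 - p) ^ (Fintype.card ι - k) else 0),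
    card_univ, sum_filter]
  refine sum_congr rfl fun k _ => ?_
  split_ifs <;> simp [mul_assoc]

end Bernoulli


open Nat in
lemma sum_range_pow_div_factorial_le_exp_sub {x : ℝ} (hx0 : 0 ≤ x) (hx1 : x ≤ 1) (n : ℕ) :
    ∑ k ∈ range (n + 1), x ^ k / k ! ≤ exp (x - x ^ (n + 1) / (exp 1 * (n + 1)!)) := by
  have htail : ∑ k ∈ range (n + 1), x ^ k / k ! ≤ exp x - x ^ (n + 1) / (n + 1)! := by
    have := sum_le_exp_of_nonneg hx0 (n + 2)
    rw [sum_range_succ] at this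
    linarith
  have hexp : exp x * (x ^ (n + 1) / (exp 1 * (n + 1)!)) ≤ x ^ (n + 1) / (n + 1)! := by
    have hratio : exp x / exp 1 ≤ 1 := div_le_one_of_le₀ (exp_le_exp.mpr hx1) (exp_pos 1).le
    calc exp x * (x ^ (n + 1) / (exp 1 * (n + 1)!))
        = exp x / exp 1 * (x ^ (n + 1) / (n + 1)!) := by field_simp
      _ ≤ x ^ (n + 1) / (n + 1)! := mul_le_of_le_one_left (by positivity) hratio
  calc ∑ k ∈ range (n + 1), x ^ k / k !
      ≤ exp x * (1 - x ^ (n + 1) / (exp 1 * (n + 1)!)) := by linarith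
    _ ≤ exp x * exp (-(x ^ (n + 1) / (exp 1 * (n + 1)!))) := by
      gcongr
      exact one_sub_le_exp_neg _
    _ = exp (x - x ^ (n + 1) / (exp 1 * (n + 1)!)) := by rw [← exp_add, sub_eq_add_neg]

lemma sum_choose_mul_pow_le_one_sub_pow_mul {p : ℝ} (hp0 : 0 ≤ p) (hp1 : p ≤ 1) (n β : ℕ) :
    ∑ k ∈ range (n + 1) with k ≤ β, (n.choose k : ℝ) * p ^ k * (1 - p) ^ (n - k) ≤
      (1 - p) ^ (n - β) * ∑ k ∈ range (β + 1), (n * p) ^ k / k.factorial := by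
  have h1p : 0 ≤ 1 - p := sub_nonneg.mpr hp1
  rw [mul_sum]
  calc ∑ k ∈ range (n + 1) with k ≤ β, (n.choose k : ℝ) * p ^ k * (1 - p) ^ (n - k)
      ≤ ∑ k ∈ range (n + 1) with k ≤ β, (1 - p) ^ (n - β) * ((n * p) ^ k / k.factorial) := by
        refine sum_le_sum fun k hk => ?_
        have hkβ : k ≤ β := (mem_filter.mp hk).2
        have hchoose : (n.choose k : ℝ) * p ^ k ≤ (n * p) ^ k / k.factorial := by
          rw [mul_pow, mul_div_right_comm]
          gcongr
          exact Nat.choose_le_pow_div k n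
        rw [mul_comm ((1 - p) ^ (n - β))]
        exact mul_le_mul hchoose (pow_le_pow_of_le_one h1p (by linarith) (by omega))
          (by positivity) (by positivity)
    _ ≤ ∑ k ∈ range (β + 1), (1 - p) ^ (n - β) * ((n * p) ^ k / k.factorial) := by
        refine sum_le_sum_of_subset_of_nonneg (fun k hk => ?_) fun k _ _ => ?_
        · simpa [Nat.lt_succ_iff] using (mem_filter.mp hk).2
        · positivity

theorem stmt_15_general {Ω : Type*} [MeasurableSpace Ω] (μ : Measure Ω) [IsProbabilityMeasure μ]
    (t β : ℕ) (p : ℝ) (hp0 : 0 < p) (hp1 : p < 1) (htp : (t : ℝ) * p ≤ 1)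
    (hβt : β ≤ t)
    (X : Fin t → Ω → ℝ) (hmeas : ∀ i, Measurable (X i))
    (hind : iIndepFun X μ)
    (hbern : ∀ i ω, X i ω = 0 ∨ X i ω = 1)
    (hp : ∀ i, μ {ω | X i ω = 1} = ENNReal.ofReal p) :
    μ {ω | (∑ i, X i ω) ≤ (β : ℝ)} ≤
      ENNReal.ofReal (Real.exp ((β : ℝ) * p -
        ((t : ℝ) * p) ^ (β + 1) / (Real.exp 1 * ((β + 1).factorial : ℝ)))) := by
  rw [measure_sum_le_eq_sum_choose hmeas hind hbern hp hp0.le hp1.le β, Fintype.card_fin]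
  refine ENNReal.ofReal_le_ofReal ?_
  have hdecay : (1 - p) ^ (t - β) ≤ exp (-(((t : ℝ) - β) * p)) := by
    rw [← Nat.cast_sub hβt, neg_mul_eq_mul_neg, exp_nat_mul]
    exact pow_le_pow_left₀ (sub_nonneg.mpr hp1.le) (one_sub_le_exp_neg p) _
  calc _ ≤ (1 - p) ^ (t - β) * ∑ k ∈ range (β + 1), (t * p) ^ k / k.factorial :=
        sum_choose_mul_pow_le_one_sub_pow_mul hp0.le hp1.le t β
    _ ≤ exp (-(((t : ℝ) - β) * p)) *
          exp (t * p - (t * p) ^ (β + 1) / (exp 1 * (β + 1).factorial)) :=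
        mul_le_mul hdecay (sum_range_pow_div_factorial_le_exp_sub (by positivity) htp β)
          (by positivity) (exp_pos _).le
    _ = _ := by rw [← exp_add]; ring_nf

theorem stmt_15 {Ω : Type*} [MeasurableSpace Ω] (μ : Measure Ω) [IsProbabilityMeasure μ]
    (t β : ℕ) (p : ℝ) (hp0 : 0 < p) (hp1 : p < 1) (htp0 : 0 < t * p) (htp : (t : ℝ) * p ≤ 1)
    (hβ : 1 ≤ β) (hβt : β ≤ t)
    (X : Fin t → Ω → ℝ) (hmeas : ∀ i, Measurable (X i))
    (hind : iIndepFun X μ)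
    (hbern : ∀ i ω, X i ω = 0 ∨ X i ω = 1)
    (hp : ∀ i, μ {ω | X i ω = 1} = ENNReal.ofReal p) :
    μ {ω | (∑ i, X i ω) ≤ (β : ℝ)} ≤
      ENNReal.ofReal (Real.exp ((β : ℝ) * p -
        ((t : ℝ) * p) ^ (β + 1) / (Real.exp 1 * ((β + 1).factorial : ℝ)))) :=
  stmt_15_general μ t β p hp0 hp1 htp hβt X hmeas hind hbern hp
end
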